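/- arXiv:2602.08279 — 2 statements merged into one kernel-verified Lean document; each statement's English description precedes it below -/
import Mathlib

section
/- Let K and K' be non-degenerate CMIs, K'' = R_K^{K'}, can(pur(K)) = (C, ⟨𝕀_K, 𝕀_K, P_1,…,P_t⟩) and can(pur(K'')) = (C'', ⟨𝕀_{K''}, 𝕀_{K''}, P''_1,…,P''_r⟩) (general notation), with S = C ∪ (∪_{i=1}^t P_i) and P'' = ∪_{j=1}^r P''_j. If K implies K' and R_K^{K'} ≠ (·,⟨⟩), then C ⊆ C'' ⊆ S \ P''. -/
/-!
A CMI is equivalent to its pure form, so `K` and `K'` may be taken pure. All the separating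
distributions are `X_i = ⟨v_i, U⟩` for `U` uniform on `𝔽₂²`; for them `H(X_α)` is `log 2`
times the rank of `{v_i : i ∈ α}`, and validity becomes an identity between ranks.

Copying one fair bit to every index of a set shows that implication can only shrink the
repeated indices, `𝕀_{K'} ⊆ 𝕀_K`, and that `C ⊆ C'`. Hence `R_K^{K'}` is already in canonical
form, with conditioning set `C' \ 𝕀_K` and parts the nonempty `Q' \ 𝕀_K`. If some
`x ∈ C' \ 𝕀_K` lay outside `S`, pick `q₁, q₂` in two different parts and set `X_{q₁} = U₁`,
`X_{q₂} = U₂`, `X_x = U₁ + U₂`: this distribution satisfies `K` but violates `K'`.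
-/

open scoped Classical

namespace Paper

variable {n : ℕ}

/-- The marginal distribution of the coordinates in `α` of a joint distribution `p` of
the discrete random variables `X_1, …, X_n` (each taking countably many values, coded
as natural numbers). -/
noncomputable def marginal (p : PMF (Fin n → ℕ)) (α : Finset (Fin n)) :
    PMF ({ i // i ∈ α } → ℕ) :=
  p.map fun x i => x i.1

/-- The Shannon (joint) entropy `H(X_α)`. -/
noncomputable def Hm (p : PMF (Fin n → ℕ)) (α : Finset (Fin n)) : ℝ :=
  ∑' y, Real.negMulLog ((marginal p α) y).toReal

/-- The conditional entropy `H(X_β | X_α) = H(X_{β ∪ α}) - H(X_α)`. -/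
noncomputable def Hc (p : PMF (Fin n → ℕ)) (β α : Finset (Fin n)) : ℝ :=
  Hm p (β ∪ α) - Hm p α

/-- Every individual random variable `X_i` has finite Shannon entropy
(the series defining `H(X_i)` is summable). -/
def FiniteEntropy (p : PMF (Fin n → ℕ)) : Prop :=
  ∀ i : Fin n, Summable fun y : ℕ => Real.negMulLog ((p.map fun x => x i) y).toReal

/-- `J(X_{Q_1}, …, X_{Q_k} | X_C) = (∑ i, H(X_{Q_i}|X_C)) - H(X_{Q_1},…,X_{Q_k}|X_C)`;
the joint conditional entropy of the tuple `(X_{Q_1},…,X_{Q_k})` equals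
`H(X_{∪ i, Q_i} | X_C)` since the two tuples determine each other. -/
noncomputable def J (p : PMF (Fin n → ℕ)) (C : Finset (Fin n))
    (Qs : Multiset (Finset (Fin n))) : ℝ :=
  (Qs.map fun Q => Hc p Q C).sum - Hc p Qs.sup C

/-- A conditional mutual independency (CMI) on `{1, …, n}`: a conditioning set `C`
together with a finite multiset `⟨Q_1, …, Q_k⟩` of subsets of `{1, …, n}`. -/
structure CMI (n : ℕ) where
  C : Finset (Fin n)
  Qs : Multiset (Finset (Fin n))

/-- `K` is valid for the joint distribution `p`. -/
def Valid (p : PMF (Fin n → ℕ)) (K : CMI n) : Prop :=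
  J p K.C K.Qs = 0

/-- `K` is degenerate: valid for every finite-entropy joint distribution. -/
def Degenerate (K : CMI n) : Prop :=
  ∀ p : PMF (Fin n → ℕ), FiniteEntropy p → Valid p K

/-- `K ∼ K'`: valid for exactly the same finite-entropy joint distributions. -/
def Equivalent (K K' : CMI n) : Prop :=
  ∀ p : PMF (Fin n → ℕ), FiniteEntropy p → (Valid p K ↔ Valid p K')

/-- `K` implies `K'`. -/
def Implies (K K' : CMI n) : Prop :=
  ∀ p : PMF (Fin n → ℕ), FiniteEntropy p → Valid p K → Valid p K'

/-- `K` is in pure form: every `Q_i` is nonempty and disjoint from `C`. -/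
def IsPure (K : CMI n) : Prop :=
  ∀ Q ∈ K.Qs, Q ≠ ∅ ∧ Q ∩ K.C = ∅

/-- The pure form `pur(K) = (C, ⟨Q_i \ C : Q_i \ C ≠ ∅⟩)`. -/
noncomputable def pur (K : CMI n) : CMI n :=
  ⟨K.C, (K.Qs.map fun Q => Q \ K.C).filter fun Q => Q ≠ ∅⟩

/-- The set `𝕀_K` of repeated indices of `K`: indices lying in `Q_i ∩ Q_j` for two
distinct entries `i ≠ j` of the multiset (automatically `∅` when `k ≤ 1`). -/
noncomputable def repSet (K : CMI n) : Finset (Fin n) :=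
  Finset.univ.filter fun q => 2 ≤ Multiset.card (K.Qs.filter fun Q => q ∈ Q)

/-- The multiset `⟨P_1, …, P_t⟩` of nonempty sets among the `Q_i \ 𝕀_K`. -/
noncomputable def parts (K : CMI n) : Multiset (Finset (Fin n)) :=
  (K.Qs.map fun Q => Q \ repSet K).filter fun P => P ≠ ∅

/-- The multiset of the `P_j`-entries of the canonical form `can(K)`
(general notation). -/
noncomputable def canParts (K : CMI n) : Multiset (Finset (Fin n)) :=
  if Multiset.card K.Qs ≤ 1 then 0
  else if repSet K ≠ ∅ ∧ Multiset.card (parts K) ≤ 1 then 0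
  else parts K

/-- The canonical form `can(K)` (of a pure-form CMI); all degenerate canonical forms
`(·,⟨⟩)` are represented by `⟨∅, 0⟩`. -/
noncomputable def can (K : CMI n) : CMI n :=
  if Multiset.card K.Qs ≤ 1 then ⟨∅, 0⟩
  else if repSet K = ∅ then ⟨K.C, parts K⟩
  else if Multiset.card (parts K) ≤ 1 then ⟨K.C, {repSet K, repSet K}⟩
  else ⟨K.C, repSet K ::ₘ repSet K ::ₘ parts K⟩

/-- `R_K^{K'}`: the CMI "`K'` conditioning on `K`"; the degenerate case `(·,⟨⟩)` is
represented by `⟨∅, 0⟩`. -/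
noncomputable def RCond (K K' : CMI n) : CMI n :=
  let I := repSet (pur K)
  let I' := repSet (pur K')
  let Ts := ((canParts (pur K')).map fun P => P \ I).filter fun T => T ≠ ∅
  if I' \ I = ∅ ∧ Multiset.card Ts ≤ 1 then ⟨∅, 0⟩
  else if I' \ I = ∅ then ⟨K'.C \ I, Ts⟩
  else if Multiset.card Ts ≤ 1 then ⟨K'.C \ I, {I' \ I, I' \ I}⟩
  else ⟨K'.C \ I, (I' \ I) ::ₘ (I' \ I) ::ₘ Ts⟩

open scoped ENNReal

lemma mem_sup_iff {Qs : Multiset (Finset (Fin n))} {x : Fin n} :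
    x ∈ Qs.sup ↔ ∃ Q ∈ Qs, x ∈ Q := by
  induction Qs using Multiset.induction_on with
  | empty => simp
  | cons Q Qs ih => simp [Multiset.sup_cons, ih]

lemma one_le_card_filter_iff {β : Type*} {s : Multiset β} {P : β → Prop} [DecidablePred P] :
    1 ≤ Multiset.card (s.filter P) ↔ ∃ a ∈ s, P a := by
  rw [← Multiset.countP_eq_card_filter]
  exact Multiset.countP_pos

lemma eq_of_mem_of_card_le_one {β : Type*} {s : Multiset β} (h : Multiset.card s ≤ 1)
    {a b : β} (ha : a ∈ s) (hb : b ∈ s) : a = b := by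
  obtain ⟨t, rfl⟩ := Multiset.exists_cons_of_mem ha
  have ht : t = 0 := Multiset.card_eq_zero.mp (by rw [Multiset.card_cons] at h; omega)
  simpa [ht, eq_comm] using hb

lemma sum_map_boole {β : Type*} (s : Multiset β) (P : β → Prop) [DecidablePred P] :
    (s.map fun a => if P a then (1 : ℤ) else 0).sum = Multiset.card (s.filter P) := by
  induction s using Multiset.induction_on with
  | empty => simp
  | cons a s ih => by_cases h : P a <;> simp [h, ih, add_comm]

lemma exists_cons_cons_of_two_le_card {β : Type*} {s : Multiset β}
    (h : 2 ≤ Multiset.card s) : ∃ a b t, s = a ::ₘ b ::ₘ t := by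
  obtain ⟨a, ha⟩ := Multiset.card_pos_iff_exists_mem.mp (by omega : 0 < Multiset.card s)
  obtain ⟨s', rfl⟩ := Multiset.exists_cons_of_mem ha
  obtain ⟨b, hb⟩ := Multiset.card_pos_iff_exists_mem.mp
    (by rw [Multiset.card_cons] at h; omega : 0 < Multiset.card s')
  obtain ⟨t, rfl⟩ := Multiset.exists_cons_of_mem hb
  exact ⟨a, b, t, rfl⟩

lemma two_le_card_filter_mem {Q₁ Q₂ : Finset (Fin n)} {rest : Multiset (Finset (Fin n))}
    {x : Fin n} (h₁ : x ∈ Q₁) (h₂ : x ∈ Q₂) :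
    2 ≤ Multiset.card ((Q₁ ::ₘ Q₂ ::ₘ rest).filter fun Q => x ∈ Q) := by
  simp [Multiset.filter_cons_of_pos, h₁, h₂]

noncomputable def ent {β : Type*} (q : PMF β) : ℝ :=
  ∑' y, Real.negMulLog (q y).toReal

lemma Hm_eq_ent_marginal (p : PMF (Fin n → ℕ)) (α : Finset (Fin n)) :
    Hm p α = ent (marginal p α) := rfl

lemma ent_pure {β : Type*} (b : β) : ent (PMF.pure b) = 0 := by
  rw [ent, tsum_eq_single b fun y hy => by simp [PMF.pure_apply, hy]]
  simp

lemma ent_uniformOfFintype (β : Type*) [Fintype β] [Nonempty β] :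
    ent (PMF.uniformOfFintype β) = Real.log (Fintype.card β) := by
  have hcard : (0 : ℝ) < Fintype.card β := by exact_mod_cast Fintype.card_pos
  simp only [ent, tsum_fintype, PMF.uniformOfFintype_apply, ENNReal.toReal_inv,
    ENNReal.toReal_natCast, Finset.sum_const, Finset.card_univ, nsmul_eq_mul, Real.negMulLog,
    Real.log_inv]
  field_simp

lemma PMF.map_apply_of_injective {α β : Type*} (q : PMF α) {f : α → β}
    (hf : Function.Injective f) (x : α) : q.map f (f x) = q x := by
  rw [PMF.map_apply, tsum_eq_single x fun a ha => if_neg fun h => ha (hf h.symm), if_pos rfl]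

lemma ent_map_of_injective {α β : Type*} (q : PMF α) {f : α → β}
    (hf : Function.Injective f) : ent (q.map f) = ent q := by
  rw [ent, ent, ← hf.tsum_eq fun y hy => ?_]
  · simp only [PMF.map_apply_of_injective q hf]
  · by_contra hy'
    refine hy ?_
    have : q.map f y = 0 := by
      rw [PMF.map_apply, ENNReal.tsum_eq_zero]
      rintro a
      exact if_neg fun h => hy' ⟨a, h.symm⟩
    simp [this]

lemma ent_map_eq_ent_map_quotient {α β : Type*} (q : PMF α) (f : α → β) :
    ent (q.map f) = ent (q.map (Quotient.mk (Setoid.ker f))) := by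
  rw [← ent_map_of_injective _ (Setoid.kerLift_injective f), PMF.map_comp]
  rfl

lemma ent_map_eq_of_ker_eq {α β γ : Type*} (q : PMF α) {f : α → β} {g : α → γ}
    (h : ∀ x y, f x = f y ↔ g x = g y) : ent (q.map f) = ent (q.map g) := by
  have hker : Setoid.ker f = Setoid.ker g := Setoid.ext h
  rw [ent_map_eq_ent_map_quotient q f, ent_map_eq_ent_map_quotient q g, hker]

lemma bool_toNat_injective : Function.Injective Bool.toNat := by decide

/-- The four linear forms on `𝔽₂² = Bool × Bool`. -/
def bitFun : Fin 4 → Bool × Bool → Bool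
  | 0, _ => false
  | 1, x => x.1
  | 2, x => x.2
  | 3, x => xor x.1 x.2

lemma eq_of_bitFun_eq : ∀ (t₁ t₂ : Fin 4) (x y : Bool × Bool), t₁ ≠ 0 → t₂ ≠ 0 → t₁ ≠ t₂ →
    bitFun t₁ x = bitFun t₁ y → bitFun t₂ x = bitFun t₂ y → x = y := by
  decide

lemma map_bitFun_uniformOfFintype {t : Fin 4} (ht : t ≠ 0) :
    (PMF.uniformOfFintype (Bool × Bool)).map (bitFun t) = PMF.uniformOfFintype Bool := by
  ext b
  have hfiber : (Finset.univ.filter fun x => b = bitFun t x).card = 2 := by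
    fin_cases t <;> cases b <;> simp_all <;> decide
  rw [PMF.map_apply, tsum_fintype]
  simp only [PMF.uniformOfFintype_apply, Finset.sum_ite, Finset.sum_const_zero, add_zero,
    Finset.sum_const, hfiber, Fintype.card_prod, Fintype.card_bool, nsmul_eq_mul]
  rw [show ((2 * 2 : ℕ) : ℝ≥0∞) = 2 * 2 by norm_num,
    ENNReal.mul_inv (by norm_num) (by norm_num), Nat.cast_ofNat, ← mul_assoc,
    ENNReal.mul_inv_cancel two_ne_zero ENNReal.ofNat_ne_top, one_mul]

/-- `X_i = ⟨v i, U⟩` (as `0` or `1`) for `U` uniform on `𝔽₂²`. -/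
noncomputable def linearPMF (v : Fin n → Fin 4) : PMF (Fin n → ℕ) :=
  (PMF.uniformOfFintype (Bool × Bool)).map fun x i => (bitFun (v i) x).toNat

/-- The rank of `{v i | i ∈ α}`: any two distinct nonzero forms on `𝔽₂²` span. -/
noncomputable def linearRank (v : Fin n → Fin 4) (α : Finset (Fin n)) : ℕ :=
  min ((α.image v).erase 0).card 2

lemma linearRank_congr {v : Fin n → Fin 4} {α β : Finset (Fin n)}
    (h : ∀ i, v i ≠ 0 → (i ∈ α ↔ i ∈ β)) : linearRank v α = linearRank v β := by
  have hs : (α.image v).erase 0 = (β.image v).erase 0 := by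
    ext t
    simp only [Finset.mem_erase, Finset.mem_image]
    constructor <;> rintro ⟨ht, i, hi, rfl⟩
    exacts [⟨ht, i, (h i ht).1 hi, rfl⟩, ⟨ht, i, (h i ht).2 hi, rfl⟩]
  rw [linearRank, linearRank, hs]

lemma marginal_linearPMF (v : Fin n → Fin 4) (α : Finset (Fin n)) :
    marginal (linearPMF v) α = (PMF.uniformOfFintype (Bool × Bool)).map
      fun x (i : { i // i ∈ α }) => (bitFun (v i) x).toNat := by
  rw [marginal, linearPMF, PMF.map_comp]
  rfl

lemma marginal_fun_eq_iff (v : Fin n → Fin 4) (α : Finset (Fin n)) (x y : Bool × Bool) :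
    ((fun (i : { i // i ∈ α }) => (bitFun (v i) x).toNat) =
        fun (i : { i // i ∈ α }) => (bitFun (v i) y).toNat) ↔
      ∀ t ∈ (α.image v).erase 0, bitFun t x = bitFun t y := by
  simp only [funext_iff, bool_toNat_injective.eq_iff, Subtype.forall]
  constructor
  · intro h t ht
    obtain ⟨i, hi, rfl⟩ := Finset.mem_image.mp (Finset.mem_of_mem_erase ht)
    exact h i hi
  · intro h i hi
    by_cases hv : v i = 0
    · simp only [hv, bitFun]
    · exact h _ (Finset.mem_erase.mpr ⟨hv, Finset.mem_image_of_mem v hi⟩)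

lemma Hm_linearPMF (v : Fin n → Fin 4) (α : Finset (Fin n)) :
    Hm (linearPMF v) α = linearRank v α * Real.log 2 := by
  rw [Hm_eq_ent_marginal, marginal_linearPMF, linearRank]
  set s := (α.image v).erase 0
  have hker : ∀ x y, _ ↔ ∀ t ∈ s, bitFun t x = bitFun t y := marginal_fun_eq_iff v α
  obtain hs | hs | hs : s.card = 0 ∨ s.card = 1 ∨ 1 < s.card := by omega
  · rw [ent_map_eq_of_ker_eq (g := Function.const (Bool × Bool) ()) _ fun x y =>
      (hker x y).trans (by simp [Finset.card_eq_zero.mp hs]), PMF.map_const, ent_pure, hs]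
    simp
  · obtain ⟨t, hst⟩ := Finset.card_eq_one.mp hs
    have ht : t ≠ 0 := Finset.ne_of_mem_erase (hst ▸ Finset.mem_singleton_self t)
    rw [ent_map_eq_of_ker_eq (g := bitFun t) _ fun x y => (hker x y).trans (by simp [hst]),
      map_bitFun_uniformOfFintype ht, ent_uniformOfFintype, hs]
    simp
  · obtain ⟨t₁, ht₁, t₂, ht₂, ht₁₂⟩ := Finset.one_lt_card.mp hs
    have hpair : ∀ x y, (∀ t ∈ s, bitFun t x = bitFun t y) ↔ x = y := fun x y =>
      ⟨fun h => eq_of_bitFun_eq t₁ t₂ x y (Finset.ne_of_mem_erase ht₁)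
        (Finset.ne_of_mem_erase ht₂) ht₁₂ (h t₁ ht₁) (h t₂ ht₂), fun h _ _ => h ▸ rfl⟩
    rw [ent_map_eq_of_ker_eq (g := id) _ fun x y => (hker x y).trans (hpair x y), PMF.map_id,
      ent_uniformOfFintype, min_eq_right hs, Fintype.card_prod, Fintype.card_bool]
    rw [show ((2 * 2 : ℕ) : ℝ) = 2 ^ 2 by norm_num, Real.log_pow, Nat.cast_ofNat]

lemma finiteEntropy_linearPMF (v : Fin n → Fin 4) : FiniteEntropy (linearPMF v) := by
  intro i
  refine summable_of_ne_finset_zero (s := {0, 1}) fun y hy => ?_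
  have : (linearPMF v).map (fun x => x i) y = 0 := by
    rw [linearPMF, PMF.map_comp, PMF.map_apply, ENNReal.tsum_eq_zero]
    refine fun x => if_neg fun h => hy ?_
    cases bitFun (v i) x <;> simp [h]
  simp [this]

lemma valid_linearPMF_iff (v : Fin n → Fin 4) (C : Finset (Fin n))
    (Qs : Multiset (Finset (Fin n))) :
    Valid (linearPMF v) ⟨C, Qs⟩ ↔
      (Qs.map fun Q => (linearRank v (Q ∪ C) : ℤ) - linearRank v C).sum =
        linearRank v (Qs.sup ∪ C) - linearRank v C := by
  have hJ : J (linearPMF v) C Qs = (((Qs.map fun Q => (linearRank v (Q ∪ C) : ℤ) -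
      linearRank v C).sum - (linearRank v (Qs.sup ∪ C) - linearRank v C) : ℤ) : ℝ) *
        Real.log 2 := by
    simp only [J, Hc, Hm_linearPMF, Int.cast_sub, Int.cast_multiset_sum, Multiset.map_map,
      Function.comp_def, Int.cast_natCast, sub_mul, ← Multiset.sum_map_mul_right]
  rw [Valid, hJ, mul_eq_zero, or_iff_left (Real.log_pos one_lt_two).ne', Int.cast_eq_zero,
    sub_eq_zero]

lemma linearRank_mono (v : Fin n → Fin 4) {α β : Finset (Fin n)} (h : α ⊆ β) :
    linearRank v α ≤ linearRank v β :=
  min_le_min_right 2 (Finset.card_le_card (Finset.erase_subset_erase 0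
    (Finset.image_subset_image h)))

lemma valid_linearPMF_of_eq_cons (v : Fin n → Fin 4) {C Q₀ : Finset (Fin n)}
    {Qs rest : Multiset (Finset (Fin n))} (hQs : Qs = Q₀ ::ₘ rest)
    (hrest : ∀ Q ∈ rest, ∀ i ∈ Q, v i ≠ 0 → i ∈ C) : Valid (linearPMF v) ⟨C, Qs⟩ := by
  have hterm : ∀ Q ∈ rest, linearRank v (Q ∪ C) = linearRank v C := fun Q hQ =>
    linearRank_congr fun i hi => by
      rw [Finset.mem_union, or_iff_right_iff_imp]
      exact fun hiQ => hrest Q hQ i hiQ hi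
  have hsup : linearRank v (Qs.sup ∪ C) = linearRank v (Q₀ ∪ C) :=
    linearRank_congr fun i hi => by
      simp only [hQs, Multiset.sup_cons, Finset.sup_eq_union, Finset.mem_union, mem_sup_iff]
      exact ⟨fun h => h.elim (·.imp_right fun ⟨Q, hQ, hiQ⟩ => hrest Q hQ i hiQ hi) Or.inr,
        fun h => h.imp_left Or.inl⟩
  have hzero : (rest.map fun Q => (linearRank v (Q ∪ C) : ℤ) - linearRank v C).sum = 0 :=
    Multiset.sum_eq_zero fun z hz => by
      obtain ⟨Q, hQ, rfl⟩ := Multiset.mem_map.mp hz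
      rw [hterm Q hQ, sub_self]
  rw [valid_linearPMF_iff, hsup, hQs, Multiset.map_cons, Multiset.sum_cons, hzero, add_zero]

/-- One fair bit, copied to every coordinate in `A`. -/
def copyVec (A : Finset (Fin n)) : Fin n → Fin 4 := fun i => if i ∈ A then 1 else 0

lemma linearRank_copyVec (A α : Finset (Fin n)) :
    linearRank (copyVec A) α = if (α ∩ A).Nonempty then 1 else 0 := by
  have hs : (α.image (copyVec A)).erase 0 = if (α ∩ A).Nonempty then {1} else ∅ := by
    ext t
    split_ifs with h <;> simp only [Finset.Nonempty, Finset.mem_inter] at h <;>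
      simp [copyVec] <;> aesop
  rw [linearRank, hs]
  split_ifs <;> rfl

lemma valid_copyVec_iff (A C : Finset (Fin n)) (Qs : Multiset (Finset (Fin n))) :
    Valid (linearPMF (copyVec A)) ⟨C, Qs⟩ ↔
      (C ∩ A).Nonempty ∨ Multiset.card (Qs.filter fun Q => (Q ∩ A).Nonempty) ≤ 1 := by
  rw [valid_linearPMF_iff]
  simp only [linearRank_copyVec]
  by_cases hC : (C ∩ A).Nonempty
  · have hβ : ∀ β : Finset (Fin n), ((β ∪ C) ∩ A).Nonempty :=
      fun β => hC.mono (Finset.inter_subset_inter_right Finset.subset_union_right)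
    simp [hC, hβ]
  · have hβ : ∀ β : Finset (Fin n), (β ∪ C) ∩ A = β ∩ A := fun β => by
      rw [Finset.union_inter_distrib_right, Finset.not_nonempty_iff_eq_empty.mp hC,
        Finset.union_empty]
    have hsup : (Qs.sup ∩ A).Nonempty ↔
        1 ≤ Multiset.card (Qs.filter fun Q => (Q ∩ A).Nonempty) := by
      simp only [one_le_card_filter_iff, Finset.Nonempty, Finset.mem_inter, mem_sup_iff]
      aesop
    simp only [hC, hβ, if_false, Nat.cast_ite, Nat.cast_one, Nat.cast_zero, sub_zero,
      sum_map_boole, false_or]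
    split_ifs with h <;> rw [hsup] at h <;> omega

/-- `X_{q₁} = U₁`, `X_{q₂} = U₂` and `X_c = U₁ + U₂` for independent fair bits `U₁, U₂`. -/
def xorVec (q₁ q₂ c : Fin n) : Fin n → Fin 4 :=
  fun i => if i = q₁ then 1 else if i = q₂ then 2 else if i = c then 3 else 0

section Xor

variable {q₁ q₂ c : Fin n}

lemma linearRank_xorVec (h₁₂ : q₁ ≠ q₂) (h₁c : q₁ ≠ c) (h₂c : q₂ ≠ c) (α : Finset (Fin n)) :
    linearRank (xorVec q₁ q₂ c) α =
      min ((if q₁ ∈ α then 1 else 0) + (if q₂ ∈ α then 1 else 0) + (if c ∈ α then 1 else 0))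
        2 := by
  have hs : (α.image (xorVec q₁ q₂ c)).erase 0 = ({1, 2, 3} : Finset (Fin 4)).filter
      fun t => (t = 1 ∧ q₁ ∈ α) ∨ (t = 2 ∧ q₂ ∈ α) ∨ (t = 3 ∧ c ∈ α) := by
    ext t
    simp only [Finset.mem_erase, Finset.mem_image, Finset.mem_filter, xorVec]
    constructor
    · rintro ⟨ht, i, hi, rfl⟩
      split_ifs at ht ⊢ <;> subst_vars <;> simp_all
    · rintro ⟨-, (⟨rfl, h⟩ | ⟨rfl, h⟩ | ⟨rfl, h⟩)⟩ <;> refine ⟨by decide, _, h, ?_⟩ <;>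
        simp [h₁₂.symm, h₁c.symm, h₂c.symm]
  rw [linearRank, hs]
  by_cases h₁ : q₁ ∈ α <;> by_cases h₂ : q₂ ∈ α <;> by_cases h₃ : c ∈ α <;>
    simp only [h₁, h₂, h₃, and_true, and_false, or_false, false_or, if_true, if_false] <;> decide

lemma not_valid_xorVec (h₁₂ : q₁ ≠ q₂) (h₁c : q₁ ≠ c) (h₂c : q₂ ≠ c)
    {C Q₁ Q₂ : Finset (Fin n)} {Qs rest : Multiset (Finset (Fin n))}
    (hc : c ∈ C) (hq₁C : q₁ ∉ C) (hq₂C : q₂ ∉ C) (hQs : Qs = Q₁ ::ₘ Q₂ ::ₘ rest)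
    (hq₁ : q₁ ∈ Q₁) (hq₂ : q₂ ∈ Q₂) : ¬ Valid (linearPMF (xorVec q₁ q₂ c)) ⟨C, Qs⟩ := by
  rw [valid_linearPMF_iff, hQs, Multiset.map_cons, Multiset.map_cons, Multiset.sum_cons,
    Multiset.sum_cons]
  set r := linearRank (xorVec q₁ q₂ c)
  have hr := linearRank_xorVec h₁₂ h₁c h₂c
  have hrC : r C = 1 := by simp [r, hr, hc, hq₁C, hq₂C]
  have hr₁ : r (Q₁ ∪ C) = 2 := by simp [r, hr, hc, hq₁]
  have hr₂ : r (Q₂ ∪ C) = 2 := by simp [r, hr, hc, hq₂]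
  have hsup : r ((Q₁ ::ₘ Q₂ ::ₘ rest).sup ∪ C) ≤ 2 := min_le_right _ _
  have hrest : 0 ≤ (rest.map fun Q => (r (Q ∪ C) : ℤ) - r C).sum :=
    Multiset.sum_nonneg fun z hz => by
      obtain ⟨Q, -, rfl⟩ := Multiset.mem_map.mp hz
      exact sub_nonneg.mpr (by exact_mod_cast linearRank_mono _ Finset.subset_union_right)
  omega

lemma sum_map_indicator_sub (Qs : Multiset (Finset (Fin n))) (C : Finset (Fin n)) (q : Fin n)
    (h : Multiset.card (Qs.filter fun Q => q ∈ Q) ≤ 1) :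
    (Qs.map fun Q => (if q ∈ Q ∪ C then 1 else 0 : ℤ) - if q ∈ C then 1 else 0).sum =
      (if q ∈ Qs.sup ∪ C then 1 else 0) - if q ∈ C then 1 else 0 := by
  by_cases hq : q ∈ C
  · simp [hq]
  · simp only [Finset.mem_union, hq, or_false, if_false, sub_zero, sum_map_boole]
    split_ifs with hs
    · have := one_le_card_filter_iff.mpr (mem_sup_iff.mp hs)
      omega
    · have := mt one_le_card_filter_iff.mp (mt mem_sup_iff.mpr hs)
      omega

lemma valid_xorVec_of_forall_notMem (h₁₂ : q₁ ≠ q₂) (h₁c : q₁ ≠ c) (h₂c : q₂ ≠ c)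
    {C : Finset (Fin n)} {Qs : Multiset (Finset (Fin n))} (hcC : c ∉ C)
    (hcQ : ∀ Q ∈ Qs, c ∉ Q) (hq₁ : Multiset.card (Qs.filter fun Q => q₁ ∈ Q) ≤ 1)
    (hq₂ : Multiset.card (Qs.filter fun Q => q₂ ∈ Q) ≤ 1) :
    Valid (linearPMF (xorVec q₁ q₂ c)) ⟨C, Qs⟩ := by
  set ind : Fin n → Finset (Fin n) → ℤ := fun q α => if q ∈ α then 1 else 0
  have hr : ∀ α, c ∉ α → (linearRank (xorVec q₁ q₂ c) α : ℤ) = ind q₁ α + ind q₂ α :=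
    fun α hα => by
      rw [linearRank_xorVec h₁₂ h₁c h₂c]
      by_cases h₁ : q₁ ∈ α <;> by_cases h₂ : q₂ ∈ α <;> simp [ind, h₁, h₂, hα]
  have hcsup : c ∉ Qs.sup ∪ C := by
    simp only [Finset.mem_union, mem_sup_iff, not_or, not_exists, not_and]
    exact ⟨hcQ, hcC⟩
  have hterm : ∀ Q ∈ Qs, (linearRank (xorVec q₁ q₂ c) (Q ∪ C) : ℤ) -
      linearRank (xorVec q₁ q₂ c) C = (ind q₁ (Q ∪ C) - ind q₁ C) + (ind q₂ (Q ∪ C) - ind q₂ C) :=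
    fun Q hQ => by
      rw [hr _ (by simp [hcQ Q hQ, hcC]), hr C hcC]
      ring
  rw [valid_linearPMF_iff, Multiset.map_congr rfl hterm, Multiset.sum_map_add,
    sum_map_indicator_sub Qs C q₁ hq₁, sum_map_indicator_sub Qs C q₂ hq₂, hr _ hcsup, hr C hcC]
  ring

end Xor

def sdiffParts (Qs : Multiset (Finset (Fin n))) (I : Finset (Fin n)) :
    Multiset (Finset (Fin n)) :=
  (Qs.map fun Q => Q \ I).filter fun P => P ≠ ∅

section SdiffParts

variable {Qs : Multiset (Finset (Fin n))} {I : Finset (Fin n)}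

lemma sdiff_mem_sdiffParts {Q : Finset (Fin n)} (hQ : Q ∈ Qs) (h : (Q \ I).Nonempty) :
    Q \ I ∈ sdiffParts Qs I :=
  Multiset.mem_filter.mpr ⟨Multiset.mem_map_of_mem _ hQ, h.ne_empty⟩

lemma exists_of_mem_sdiffParts {P : Finset (Fin n)} (hP : P ∈ sdiffParts Qs I) :
    ∃ Q ∈ Qs, Q \ I = P := by
  obtain ⟨hP, -⟩ := Multiset.mem_filter.mp hP
  exact Multiset.mem_map.mp hP

lemma sdiffParts_sdiffParts (A B : Finset (Fin n)) :
    sdiffParts (sdiffParts Qs A) B = sdiffParts Qs (A ∪ B) := by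
  have hsd : ∀ (Q : Finset (Fin n)), (Q \ A) \ B = Q \ (A ∪ B) := fun Q => sdiff_sdiff_left
  induction Qs using Multiset.induction_on with
  | empty => rfl
  | cons Q Qs ih =>
    simp only [sdiffParts, Multiset.map_cons] at ih ⊢
    by_cases hA : Q \ A = ∅
    · have hAB : Q \ (A ∪ B) = ∅ := by rw [← hsd, hA, Finset.empty_sdiff]
      simp [Multiset.filter_cons_of_neg, hA, hAB, ih]
    · simp [Multiset.filter_cons, hA, ih, hsd]

lemma sup_sdiffParts : (sdiffParts Qs I).sup = Qs.sup \ I := by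
  ext x
  simp only [mem_sup_iff, Finset.mem_sdiff]
  constructor
  · rintro ⟨P, hP, hx⟩
    obtain ⟨Q, hQ, rfl⟩ := exists_of_mem_sdiffParts hP
    exact ⟨⟨Q, hQ, (Finset.mem_sdiff.mp hx).1⟩, (Finset.mem_sdiff.mp hx).2⟩
  · rintro ⟨⟨Q, hQ, hx⟩, hxI⟩
    have hx' : x ∈ Q \ I := Finset.mem_sdiff.mpr ⟨hx, hxI⟩
    exact ⟨Q \ I, sdiff_mem_sdiffParts hQ ⟨x, hx'⟩, hx'⟩

lemma card_filter_mem_sdiffParts_le (x : Fin n) :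
    Multiset.card ((sdiffParts Qs I).filter fun P => x ∈ P) ≤
      Multiset.card (Qs.filter fun Q => x ∈ Q) := by
  rw [sdiffParts, Multiset.filter_filter, Multiset.filter_map, Multiset.card_map]
  exact Multiset.card_le_card (Multiset.monotone_filter_right _
    fun Q hQ => (Finset.mem_sdiff.mp hQ.1).1)

lemma sdiffParts_empty (h : ∀ Q ∈ Qs, Q ≠ ∅) : sdiffParts Qs ∅ = Qs := by
  simp only [sdiffParts, Finset.sdiff_empty, Multiset.map_id']
  exact Multiset.filter_eq_self.mpr h

lemma sum_map_sdiffParts {f : Finset (Fin n) → ℝ} (hf : f ∅ = 0) :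
    ((sdiffParts Qs I).map f).sum = (Qs.map fun Q => f (Q \ I)).sum := by
  induction Qs using Multiset.induction_on with
  | empty => rfl
  | cons Q Qs ih =>
    simp only [sdiffParts, Multiset.map_cons] at ih ⊢
    by_cases h : Q \ I = ∅ <;> simp [h, hf, ih]

lemma exists_eq_cons_cons_of_two_le_card_sdiffParts
    (h : 2 ≤ Multiset.card (sdiffParts Qs I)) :
    ∃ Q₁ Q₂ rest, Qs = Q₁ ::ₘ Q₂ ::ₘ rest ∧ (Q₁ \ I).Nonempty ∧ (Q₂ \ I).Nonempty := by
  rw [sdiffParts, Multiset.filter_map, Multiset.card_map] at h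
  obtain ⟨Q₁, Q₂, t, ht⟩ := exists_cons_cons_of_two_le_card h
  obtain ⟨u, hu⟩ := Multiset.le_iff_exists_add.mp
    (Multiset.filter_le (fun Q => ¬Q \ I = ∅) Qs)
  have hmem : ∀ Q ∈ Q₁ ::ₘ Q₂ ::ₘ t, (Q \ I).Nonempty := fun Q hQ => by
    rw [← ht] at hQ
    exact Finset.nonempty_iff_ne_empty.mpr (Multiset.mem_filter.mp hQ).2
  refine ⟨Q₁, Q₂, t + u, ?_, hmem Q₁ (by simp), hmem Q₂ (by simp)⟩
  rw [hu, ← Multiset.cons_add, ← Multiset.cons_add, ← ht]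
  rfl

end SdiffParts

lemma pur_eq_mk_sdiffParts (K : CMI n) : pur K = ⟨K.C, sdiffParts K.Qs K.C⟩ := rfl

lemma parts_eq_sdiffParts (K : CMI n) : parts K = sdiffParts K.Qs (repSet K) := rfl

lemma mem_repSet {K : CMI n} {x : Fin n} :
    x ∈ repSet K ↔ 2 ≤ Multiset.card (K.Qs.filter fun Q => x ∈ Q) := by
  simp [repSet]

lemma mem_repSet_of_eq_cons_cons {K : CMI n} {Q₁ Q₂ : Finset (Fin n)}
    {rest : Multiset (Finset (Fin n))} (hQs : K.Qs = Q₁ ::ₘ Q₂ ::ₘ rest) {x : Fin n}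
    (h₁ : x ∈ Q₁) (h₂ : x ∈ Q₂) : x ∈ repSet K :=
  mem_repSet.mpr (hQs ▸ two_le_card_filter_mem h₁ h₂)

lemma exists_mem_of_mem_repSet {K : CMI n} {x : Fin n} (hx : x ∈ repSet K) :
    ∃ Q ∈ K.Qs, x ∈ Q :=
  one_le_card_filter_iff.mp (one_le_two.trans (mem_repSet.mp hx))

lemma repSet_sdiffParts_eq_empty {K : CMI n} {I : Finset (Fin n)} (hI : repSet K ⊆ I)
    (C : Finset (Fin n)) : repSet ⟨C, sdiffParts K.Qs I⟩ = ∅ := by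
  refine Finset.eq_empty_of_forall_notMem fun x hx => ?_
  obtain ⟨P, hP, hxP⟩ := exists_mem_of_mem_repSet hx
  obtain ⟨Q, -, rfl⟩ := exists_of_mem_sdiffParts hP
  exact (Finset.mem_sdiff.mp hxP).2 (hI (mem_repSet.mpr
    ((mem_repSet.mp hx).trans (card_filter_mem_sdiffParts_le x))))

lemma isPure_mk_sdiffParts {C I : Finset (Fin n)} {Qs : Multiset (Finset (Fin n))}
    (h : ∀ Q ∈ Qs, Q ∩ C ⊆ I) : IsPure ⟨C, sdiffParts Qs I⟩ := by
  intro P hP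
  obtain ⟨Q, hQ, rfl⟩ := exists_of_mem_sdiffParts hP
  refine ⟨(Multiset.mem_filter.mp hP).2, Finset.eq_empty_of_forall_notMem fun x hx => ?_⟩
  obtain ⟨hxQ, hxC⟩ := Finset.mem_inter.mp hx
  obtain ⟨hxQ, hxI⟩ := Finset.mem_sdiff.mp hxQ
  exact hxI (h Q hQ (Finset.mem_inter.mpr ⟨hxQ, hxC⟩))

lemma isPure_pur (K : CMI n) : IsPure (pur K) :=
  isPure_mk_sdiffParts fun _ _ => Finset.inter_subset_right

namespace IsPure

variable {K : CMI n}

lemma notMem_C (hK : IsPure K) {Q : Finset (Fin n)} (hQ : Q ∈ K.Qs) {x : Fin n} (hx : x ∈ Q) :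
    x ∉ K.C :=
  fun hxC => Finset.notMem_empty x ((hK Q hQ).2 ▸ Finset.mem_inter.mpr ⟨hx, hxC⟩)

lemma notMem_sup_of_mem_C (hK : IsPure K) {x : Fin n} (hx : x ∈ K.C) : x ∉ K.Qs.sup := fun hs => by
  obtain ⟨Q, hQ, hxQ⟩ := mem_sup_iff.mp hs
  exact hK.notMem_C hQ hxQ hx

lemma notMem_C_of_mem_repSet (hK : IsPure K) {x : Fin n} (hx : x ∈ repSet K) : x ∉ K.C := by
  obtain ⟨Q, hQ, hxQ⟩ := exists_mem_of_mem_repSet hx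
  exact hK.notMem_C hQ hxQ

lemma pur_eq (hK : IsPure K) : pur K = K := by
  have hQs : ∀ Q ∈ K.Qs, Q \ K.C = Q := fun Q hQ =>
    Finset.sdiff_eq_self_of_disjoint (Finset.disjoint_iff_inter_eq_empty.mpr (hK Q hQ).2)
  simp only [pur, Multiset.map_congr rfl hQs, Multiset.map_id']
  exact congrArg _ (Multiset.filter_eq_self.mpr fun Q hQ => (hK Q hQ).1)

lemma can_eq (hK : IsPure K) (hI : repSet K = ∅) (h2 : 2 ≤ Multiset.card K.Qs) : can K = K := by
  rw [can, if_neg (by omega), if_pos hI, parts_eq_sdiffParts, hI,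
    sdiffParts_empty fun Q hQ => (hK Q hQ).1]

lemma canParts_eq (hK : IsPure K) (hI : repSet K = ∅) (h2 : 2 ≤ Multiset.card K.Qs) :
    canParts K = K.Qs := by
  rw [canParts, if_neg (by omega), if_neg fun h => h.1 hI, parts_eq_sdiffParts, hI,
    sdiffParts_empty fun Q hQ => (hK Q hQ).1]

end IsPure

lemma degenerate_mk_zero (C : Finset (Fin n)) : Degenerate ⟨C, 0⟩ := by
  intro p _
  simp [Valid, J, Hc]

lemma equivalent_pur (K : CMI n) : Equivalent (pur K) K := by
  intro p _
  have hHc : ∀ Q, Hc p (Q \ K.C) K.C = Hc p Q K.C := fun Q => by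
    rw [Hc, Hc, Finset.sdiff_union_self_eq_union]
  rw [Valid, Valid, pur_eq_mk_sdiffParts, J, J]
  dsimp only
  rw [sum_map_sdiffParts (by simp [Hc]), sup_sdiffParts, hHc]
  simp only [hHc]

lemma repSet_subset_of_implies {L L' : CMI n} (hL' : IsPure L') (h : Implies L L') :
    repSet L' ⊆ repSet L := by
  intro q hq'
  by_contra hq
  have hmeets : ∀ M : CMI n, Multiset.card (M.Qs.filter fun Q => (Q ∩ {q}).Nonempty) =
      Multiset.card (M.Qs.filter fun Q => q ∈ Q) := fun M => by
    refine congrArg _ (Multiset.filter_congr fun Q _ => ⟨fun ⟨x, hx⟩ => ?_, fun hqQ =>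
      ⟨q, Finset.mem_inter.mpr ⟨hqQ, Finset.mem_singleton_self q⟩⟩⟩)
    obtain ⟨hxQ, hxq⟩ := Finset.mem_inter.mp hx
    exact Finset.mem_singleton.mp hxq ▸ hxQ
  have hvalid : Valid (linearPMF (copyVec {q})) L := (valid_copyVec_iff _ _ _).mpr
    (Or.inr (by rw [hmeets L]; rw [mem_repSet] at hq; omega))
  rcases (valid_copyVec_iff _ _ _).mp (h _ (finiteEntropy_linearPMF _) hvalid)
    with ⟨x, hx⟩ | hcard
  · obtain ⟨hxC, hxq⟩ := Finset.mem_inter.mp hx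
    exact hL'.notMem_C_of_mem_repSet hq' (Finset.mem_singleton.mp hxq ▸ hxC)
  · rw [hmeets L'] at hcard
    have := mem_repSet.mp hq'
    omega

lemma C_subset_of_implies {L L' : CMI n} (hL' : IsPure L') (h : Implies L L')
    (h2 : 2 ≤ Multiset.card L'.Qs) : L.C ⊆ L'.C := by
  intro c hc
  by_contra hc'
  set A := insert c L'.Qs.sup
  have hvalid : Valid (linearPMF (copyVec A)) L := (valid_copyVec_iff _ _ _).mpr
    (Or.inl ⟨c, Finset.mem_inter.mpr ⟨hc, Finset.mem_insert_self c _⟩⟩)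
  rcases (valid_copyVec_iff _ _ _).mp (h _ (finiteEntropy_linearPMF _) hvalid)
    with ⟨x, hx⟩ | hcard
  · obtain ⟨hxC, hxA⟩ := Finset.mem_inter.mp hx
    rcases Finset.mem_insert.mp hxA with rfl | hxs
    · exact hc' hxC
    · exact hL'.notMem_sup_of_mem_C hxC hxs
  · have hall : L'.Qs.filter (fun Q => (Q ∩ A).Nonempty) = L'.Qs :=
      Multiset.filter_eq_self.mpr fun Q hQ => by
        obtain ⟨x, hx⟩ := Finset.nonempty_iff_ne_empty.mpr (hL' Q hQ).1
        exact ⟨x, Finset.mem_inter.mpr ⟨hx, Finset.mem_insert_of_mem (Multiset.le_sup hQ hx)⟩⟩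
    rw [hall] at hcard
    omega

/-- `can L` has no parts only when `L` has at most one entry or at most one part. -/
lemma mem_of_notMem_canParts_sup {L : CMI n} {Q₀ Q : Finset (Fin n)} {x y : Fin n}
    (hQ₀ : Q₀ ∈ L.Qs) (hx : x ∈ Q₀) (hxI : x ∉ repSet L) (hxP : x ∉ (canParts L).sup)
    (hQ : Q ∈ L.Qs) (hy : y ∈ Q) (hyI : y ∉ repSet L) : x ∈ Q := by
  have hx' : x ∈ Q₀ \ repSet L := Finset.mem_sdiff.mpr ⟨hx, hxI⟩
  have hP₀ : Q₀ \ repSet L ∈ parts L := sdiff_mem_sdiffParts hQ₀ ⟨x, hx'⟩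
  have hP : Q \ repSet L ∈ parts L := sdiff_mem_sdiffParts hQ ⟨y, Finset.mem_sdiff.mpr ⟨hy, hyI⟩⟩
  unfold canParts at hxP
  split_ifs at hxP with h₁ h₂
  · exact eq_of_mem_of_card_le_one h₁ hQ₀ hQ ▸ hx
  · exact (Finset.mem_sdiff.mp (eq_of_mem_of_card_le_one h₂.2 hP₀ hP ▸ hx')).1
  · exact absurd (mem_sup_iff.mpr ⟨_, hP₀, hx'⟩) hxP

lemma mem_C_or_mem_canParts_sup_of_implies {L L' : CMI n} (hL' : IsPure L')
    (h : Implies L L') {Q₁ Q₂ : Finset (Fin n)} {rest : Multiset (Finset (Fin n))}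
    (hQs : L'.Qs = Q₁ ::ₘ Q₂ ::ₘ rest) {q₁ q₂ x : Fin n} (hq₁ : q₁ ∈ Q₁) (hq₂ : q₂ ∈ Q₂)
    (h₁₂ : q₁ ≠ q₂) (hq₁I : q₁ ∉ repSet L) (hq₂I : q₂ ∉ repSet L) (hx : x ∈ L'.C)
    (hxI : x ∉ repSet L) : x ∈ L.C ∨ x ∈ (canParts L).sup := by
  by_contra! ⟨hxC, hxP⟩
  have hq₁C : q₁ ∉ L'.C := hL'.notMem_C (by simp [hQs]) hq₁
  have hq₂C : q₂ ∉ L'.C := hL'.notMem_C (by simp [hQs]) hq₂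
  have h₁x : q₁ ≠ x := fun h => hq₁C (h ▸ hx)
  have h₂x : q₂ ≠ x := fun h => hq₂C (h ▸ hx)
  refine not_valid_xorVec h₁₂ h₁x h₂x hx hq₁C hq₂C hQs hq₁ hq₂
    (h _ (finiteEntropy_linearPMF _) ?_)
  by_cases hxQ : ∃ Q₀ ∈ L.Qs, x ∈ Q₀
  · obtain ⟨Q₀, hQ₀, hxQ₀⟩ := hxQ
    obtain ⟨rest', hrest'⟩ := Multiset.exists_cons_of_mem hQ₀
    refine valid_linearPMF_of_eq_cons _ hrest' fun Q hQ i hiQ hi => ?_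
    have hxQ : x ∉ Q := fun hxQ => by
      obtain ⟨rest'', rfl⟩ := Multiset.exists_cons_of_mem hQ
      exact hxI (mem_repSet_of_eq_cons_cons hrest' hxQ₀ hxQ)
    have hQL : Q ∈ L.Qs := hrest' ▸ Multiset.mem_cons_of_mem hQ
    have hi' : i = q₁ ∨ i = q₂ ∨ i = x := by
      unfold xorVec at hi
      split_ifs at hi <;> simp_all
    exfalso
    rcases hi' with rfl | rfl | rfl
    · exact hxQ (mem_of_notMem_canParts_sup hQ₀ hxQ₀ hxI hxP hQL hiQ hq₁I)
    · exact hxQ (mem_of_notMem_canParts_sup hQ₀ hxQ₀ hxI hxP hQL hiQ hq₂I)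
    · exact hxQ hiQ
  · simp only [not_exists, not_and] at hxQ
    have hcard : ∀ q ∉ repSet L, Multiset.card (L.Qs.filter fun Q => q ∈ Q) ≤ 1 :=
      fun q hq => by rw [mem_repSet] at hq; omega
    exact valid_xorVec_of_forall_notMem h₁₂ h₁x h₂x hxC hxQ (hcard q₁ hq₁I) (hcard q₂ hq₂I)

lemma RCond_eq_of_repSet_subset {K K' : CMI n} (hI : repSet (pur K') ⊆ repSet (pur K))
    (hR : ¬ Degenerate (RCond K K')) :
    RCond K K' = ⟨K'.C \ repSet (pur K), sdiffParts (pur K').Qs (repSet (pur K))⟩ ∧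
      2 ≤ Multiset.card (sdiffParts (pur K').Qs (repSet (pur K))) := by
  have hTs : sdiffParts (canParts (pur K')) (repSet (pur K)) = 0 ∨
      sdiffParts (canParts (pur K')) (repSet (pur K)) =
        sdiffParts (pur K').Qs (repSet (pur K)) := by
    unfold canParts
    split_ifs
    · exact Or.inl rfl
    · exact Or.inl rfl
    · rw [parts_eq_sdiffParts, sdiffParts_sdiffParts, Finset.union_eq_right.mpr hI]
      exact Or.inr rfl
  have hempty : repSet (pur K') \ repSet (pur K) = ∅ := Finset.sdiff_eq_empty_iff_subset.mpr hI
  simp only [RCond, hempty, true_and, if_true] at hR ⊢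
  set Ts := sdiffParts (canParts (pur K')) (repSet (pur K))
  change ¬Degenerate (if Multiset.card Ts ≤ 1 then ⟨∅, 0⟩ else ⟨K'.C \ repSet (pur K), Ts⟩) at hR
  change (if Multiset.card Ts ≤ 1 then (⟨∅, 0⟩ : CMI n) else ⟨K'.C \ repSet (pur K), Ts⟩) = _ ∧ _
  rcases hTs with h0 | hD
  · rw [h0, if_pos (by simp)] at hR
    exact absurd (degenerate_mk_zero ∅) hR
  · rw [hD] at hR ⊢
    split_ifs at hR ⊢ with h2
    · exact absurd (degenerate_mk_zero ∅) hR
    · exact ⟨rfl, by omega⟩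

theorem stmt16_general {n : ℕ} (K K' : CMI n)
    (himp : Implies K K') (hR : ¬ Degenerate (RCond K K')) :
    K.C ⊆ (can (pur (RCond K K'))).C ∧
      (can (pur (RCond K K'))).C ⊆
        (K.C ∪ (canParts (pur K)).sup) \ (canParts (pur (RCond K K'))).sup := by
  have himp' : Implies (pur K) (pur K') := fun p hp hv =>
    (equivalent_pur K' p hp).2 (himp p hp ((equivalent_pur K p hp).1 hv))
  have hI := repSet_subset_of_implies (isPure_pur K') himp'
  obtain ⟨hRC, h2⟩ := RCond_eq_of_repSet_subset hI hR
  obtain ⟨Q₁, Q₂, rest, hQs, ⟨q₁, hq₁⟩, ⟨q₂, hq₂⟩⟩ :=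
    exists_eq_cons_cons_of_two_le_card_sdiffParts h2
  rw [Finset.mem_sdiff] at hq₁ hq₂
  have h₁₂ : q₁ ≠ q₂ := fun h => hq₁.2 (hI (mem_repSet_of_eq_cons_cons hQs hq₁.1 (h ▸ hq₂.1)))
  have hRpure : IsPure (RCond K K') := hRC ▸ isPure_mk_sdiffParts fun Q hQ =>
    (Finset.inter_subset_inter_left Finset.sdiff_subset).trans
      ((isPure_pur K' Q hQ).2 ▸ Finset.empty_subset _)
  have hRrep : repSet (RCond K K') = ∅ := hRC ▸ repSet_sdiffParts_eq_empty hI _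
  have hRcard : 2 ≤ Multiset.card (RCond K K').Qs := hRC ▸ h2
  rw [hRpure.pur_eq, hRpure.can_eq hRrep hRcard, hRpure.canParts_eq hRrep hRcard, hRC]
  refine ⟨fun c hc => Finset.mem_sdiff.mpr ⟨C_subset_of_implies (isPure_pur K') himp'
    (by simp [hQs]) hc, fun hcI => (isPure_pur K).notMem_C_of_mem_repSet hcI hc⟩, fun x hx => ?_⟩
  obtain ⟨hxC', hxI⟩ := Finset.mem_sdiff.mp hx
  refine Finset.mem_sdiff.mpr ⟨Finset.mem_union.mpr (mem_C_or_mem_canParts_sup_of_implies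
    (isPure_pur K') himp' hQs hq₁.1 hq₂.1 h₁₂ hq₁.2 hq₂.2 hxC' hxI), fun hs => ?_⟩
  rw [sup_sdiffParts] at hs
  exact (isPure_pur K').notMem_sup_of_mem_C hxC' (Finset.mem_sdiff.mp hs).1

/-- if `K` implies `K'` and `R_K^{K'} ≠ (·,⟨⟩)`, then
`C ⊆ C'' ⊆ S \ P''`, where `S = C ∪ (∪ P_i)` and `P'' = ∪ P''_j`. -/
theorem stmt16 {n : ℕ} (K K' : CMI n)
    (hdK : ¬ Degenerate K) (hdK' : ¬ Degenerate K')
    (himp : Implies K K') (hR : ¬ Degenerate (RCond K K')) :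
    K.C ⊆ (can (pur (RCond K K'))).C ∧
      (can (pur (RCond K K'))).C ⊆
        (K.C ∪ (canParts (pur K)).sup) \ (canParts (pur (RCond K K'))).sup :=
  stmt16_general K K' himp hR

end Paper
end

section
/- Let C, Q_1,…,Q_k ⊆ {1,…,n} (k ≥ 0) and Q = ∪_{i=1}^k Q_i. For a given joint distribution of X_1,…,X_n, the CMI K_1 = (C, ⟨Q_1,…,Q_k⟩) is valid if and only if for every choice of subsets W_i ⊆ Q_i (1 ≤ i ≤ k) and every R ⊆ Q \ (∪_{i=1}^k W_i), the CMI ((C ∪ R), ⟨W_1,…,W_k⟩) is valid. -/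
open scoped Classical

namespace Paper

variable {n : ℕ}

open ENNReal

/-- entropy of a PMF, valued in `ℝ≥0∞`. -/
noncomputable def eent {α : Type*} (q : PMF α) : ℝ≥0∞ :=
  ∑' a, ENNReal.ofReal (Real.negMulLog (q a).toReal)

variable {α β γ : Type*}

lemma pmf_ne_top (q : PMF α) (a : α) : q a ≠ ⊤ :=
  ne_top_of_le_ne_top one_ne_top (q.coe_le_one a)

lemma pmf_toReal_le_one (q : PMF α) (a : α) : (q a).toReal ≤ 1 := by
  have := q.coe_le_one a
  simpa using ENNReal.toReal_mono one_ne_top this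

lemma ofReal_negMulLog_eq (q : PMF α) (a : α) :
    ENNReal.ofReal (Real.negMulLog (q a).toReal) =
      q a * ENNReal.ofReal (-Real.log (q a).toReal) := by
  by_cases h : q a = 0
  · simp [h]
  · have hne := pmf_ne_top q a
    have h0 : 0 < (q a).toReal := ENNReal.toReal_pos h hne
    have : Real.negMulLog (q a).toReal = (q a).toReal * (-Real.log (q a).toReal) := by
      simp only [Real.negMulLog]
      ring
    rw [this, ENNReal.ofReal_mul h0.le, ENNReal.ofReal_toReal hne]

lemma eent_eq_alt (q : PMF α) :
    eent q = ∑' a, q a * ENNReal.ofReal (-Real.log (q a).toReal) :=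
  tsum_congr fun a => ofReal_negMulLog_eq q a

/-- regrouping over fibers of a map -/
lemma tsum_map_mul (q : PMF β) (u : β → α) (w : α → ℝ≥0∞) :
    ∑' a, (q.map u) a * w a = ∑' b, q b * w (u b) := by
  calc ∑' a, (q.map u) a * w a
      = ∑' a, ∑' b, (if a = u b then q b * w (u b) else 0) := by
        refine tsum_congr fun a => ?_
        rw [PMF.map_apply, ← ENNReal.tsum_mul_right]
        refine tsum_congr fun b => ?_
        split_ifs with h
        · rw [h]
        · simp
    _ = ∑' b, ∑' a, (if a = u b then q b * w (u b) else 0) := ENNReal.tsum_comm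
    _ = ∑' b, q b * w (u b) := tsum_congr fun b => tsum_ite_eq (u b) _

lemma map_apply_le (q : PMF β) (u : β → α) (b : β) : q b ≤ (q.map u) (u b) := by
  rw [PMF.map_apply]
  have : q b = (fun b' => if u b = u b' then q b' else 0) b := by simp
  rw [this]
  exact ENNReal.le_tsum b

lemma map_apply_inj {u : β → α} (hu : Function.Injective u) (q : PMF β) (b : β) :
    (q.map u) (u b) = q b := by
  rw [PMF.map_apply]
  refine (tsum_eq_single b fun b' hb' => ?_).trans (by simp)
  simp only [hu.eq_iff]
  exact if_neg fun h => hb' h.symm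

lemma eent_map_inj {u : β → α} (hu : Function.Injective u) (q : PMF β) :
    eent (q.map u) = eent q := by
  rw [eent_eq_alt, tsum_map_mul, eent_eq_alt]
  exact tsum_congr fun b => by rw [map_apply_inj hu]

lemma eent_map_le (q : PMF β) (u : β → α) : eent (q.map u) ≤ eent q := by
  rw [eent_eq_alt (q.map u), tsum_map_mul, eent_eq_alt]
  refine ENNReal.tsum_le_tsum fun b => ?_
  by_cases h : q b = 0
  · simp [h]
  · refine mul_le_mul_right (ENNReal.ofReal_le_ofReal (neg_le_neg ?_)) _
    refine Real.log_le_log (ENNReal.toReal_pos h (pmf_ne_top q b)) ?_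
    exact ENNReal.toReal_mono (pmf_ne_top _ _) (map_apply_le q u b)

/-- Gibbs' inequality in `ℝ≥0∞`. -/
lemma gibbs (q : PMF α) (b : α → ℝ) (hb0 : ∀ t, 0 ≤ b t) (hb1 : ∀ t, b t ≤ 1)
    (hpos : ∀ t, q t ≠ 0 → 0 < b t) (hsum : ∑' t, ENNReal.ofReal (b t) ≤ 1) :
    eent q ≤ ∑' t, q t * ENNReal.ofReal (-Real.log (b t)) := by
  have key : ∀ t, ENNReal.ofReal (Real.negMulLog (q t).toReal) + q t ≤
      q t * ENNReal.ofReal (-Real.log (b t)) + ENNReal.ofReal (b t) := by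
    intro t
    by_cases h : q t = 0
    · simp [h]
    · have hne := pmf_ne_top q t
      have hA : 0 < (q t).toReal := ENNReal.toReal_pos h hne
      have hA1 := pmf_toReal_le_one q t
      have hB : 0 < b t := hpos t h
      set A := (q t).toReal with hAdef
      have hlog : Real.log (b t / A) ≤ b t / A - 1 :=
        Real.log_le_sub_one_of_pos (div_pos hB hA)
      rw [Real.log_div (ne_of_gt hB) (ne_of_gt hA)] at hlog
      have hreal : Real.negMulLog A + A ≤ A * (-Real.log (b t)) + b t := by
        have h1 : A * (Real.log (b t) - Real.log A) ≤ b t - A := by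
          have := mul_le_mul_of_nonneg_left hlog hA.le
          calc A * (Real.log (b t) - Real.log A) ≤ A * (b t / A - 1) := this
            _ = b t - A := by field_simp
        simp only [Real.negMulLog]
        nlinarith
      have hlogb : 0 ≤ -Real.log (b t) := by
        simpa using Real.log_nonpos hB.le (hb1 t)
      have hnml : 0 ≤ Real.negMulLog A := Real.negMulLog_nonneg hA.le hA1
      calc ENNReal.ofReal (Real.negMulLog A) + q t
          = ENNReal.ofReal (Real.negMulLog A + A) := by
            rw [ENNReal.ofReal_add hnml hA.le, ENNReal.ofReal_toReal hne]
        _ ≤ ENNReal.ofReal (A * (-Real.log (b t)) + b t) :=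
            ENNReal.ofReal_le_ofReal hreal
        _ = q t * ENNReal.ofReal (-Real.log (b t)) + ENNReal.ofReal (b t) := by
            rw [ENNReal.ofReal_add (by positivity) (hb0 t), ENNReal.ofReal_mul hA.le,
              ENNReal.ofReal_toReal hne]
  have hts := ENNReal.tsum_le_tsum key
  rw [ENNReal.tsum_add, ENNReal.tsum_add, q.tsum_coe] at hts
  by_cases hc : (∑' t, q t * ENNReal.ofReal (-Real.log (b t))) = ⊤
  · exact hc ▸ le_top
  · have h2 : eent q + 1 ≤ (∑' t, q t * ENNReal.ofReal (-Real.log (b t))) + 1 :=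
      hts.trans (add_le_add_right hsum _)
    exact (ENNReal.add_le_add_iff_right one_ne_top).mp h2

lemma map_snd_apply (q : PMF (α × β)) (z : β) : (q.map Prod.snd) z = ∑' x, q (x, z) := by
  rw [PMF.map_apply, ENNReal.tsum_prod']
  refine tsum_congr fun x => ?_
  exact (tsum_eq_single z fun z' h => if_neg fun hh => h hh.symm).trans (by simp)

private lemma inv_mul_le_one' (a : ℝ≥0∞) (ha : a ≠ ⊤) : a⁻¹ * a ≤ 1 := by
  rcases eq_or_ne a 0 with h | h
  · simp [h]
  · rw [ENNReal.inv_mul_cancel h ha]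

/-- Submodularity: `H(XYZ) + H(Z) ≤ H(XZ) + H(YZ)`. -/
lemma eent_submod {A B E : Type*} (q : PMF (A × B × E)) :
    eent q + eent (q.map fun t => t.2.2) ≤
      eent (q.map fun t => (t.1, t.2.2)) + eent (q.map Prod.snd) := by
  set pXZ := q.map (fun t : A × B × E => (t.1, t.2.2)) with hpXZ
  set pYZ := q.map (Prod.snd : A × B × E → B × E) with hpYZ
  set pZ := q.map (fun t : A × B × E => t.2.2) with hpZ
  have hcompX : pXZ.map Prod.snd = pZ := by
    rw [hpXZ, PMF.map_comp]; rfl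
  have hcompY : pYZ.map Prod.snd = pZ := by
    rw [hpYZ, PMF.map_comp]; rfl
  have hXZ_Z : ∀ z, pZ z = ∑' x, pXZ (x, z) := fun z => by
    rw [← hcompX, map_snd_apply]
  have hYZ_Z : ∀ z, pZ z = ∑' y, pYZ (y, z) := fun z => by
    rw [← hcompY, map_snd_apply]
  have hXZ_le : ∀ x z, pXZ (x, z) ≤ pZ z := fun x z => (hXZ_Z z) ▸ ENNReal.le_tsum x
  have hYZ_le : ∀ y z, pYZ (y, z) ≤ pZ z := fun y z => (hYZ_Z z) ▸ ENNReal.le_tsum y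
  set b : A × B × E → ℝ :=
    fun t => (pXZ (t.1, t.2.2)).toReal * (pYZ t.2).toReal / (pZ t.2.2).toReal with hbdef
  have hqle : ∀ t : A × B × E, q t ≤ pXZ (t.1, t.2.2) ∧ q t ≤ pYZ t.2 ∧ q t ≤ pZ t.2.2 := by
    intro t
    exact ⟨map_apply_le q _ t, map_apply_le q _ t, map_apply_le q _ t⟩
  have hb0 : ∀ t, 0 ≤ b t := fun t => by positivity
  have hb1 : ∀ t, b t ≤ 1 := by
    intro t
    rcases eq_or_ne (pZ t.2.2) 0 with h | h
    · simp [hbdef, h]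
    · have hZt : 0 < (pZ t.2.2).toReal := ENNReal.toReal_pos h (pmf_ne_top _ _)
      rw [hbdef, div_le_one hZt]
      have h1 : (pXZ (t.1, t.2.2)).toReal ≤ (pZ t.2.2).toReal :=
        ENNReal.toReal_mono (pmf_ne_top _ _) (hXZ_le _ _)
      have h2 : (pYZ t.2).toReal ≤ 1 := pmf_toReal_le_one _ _
      nlinarith [ENNReal.toReal_nonneg (a := pXZ (t.1, t.2.2)),
        ENNReal.toReal_nonneg (a := pYZ t.2)]
  have hpos : ∀ t, q t ≠ 0 → 0 < b t := by
    intro t ht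
    have h1 : 0 < (pXZ (t.1, t.2.2)).toReal :=
      ENNReal.toReal_pos (fun h => ht (le_antisymm (h ▸ (hqle t).1) (zero_le)))
        (pmf_ne_top _ _)
    have h2 : 0 < (pYZ t.2).toReal :=
      ENNReal.toReal_pos (fun h => ht (le_antisymm (h ▸ (hqle t).2.1) (zero_le)))
        (pmf_ne_top _ _)
    have h3 : 0 < (pZ t.2.2).toReal :=
      ENNReal.toReal_pos (fun h => ht (le_antisymm (h ▸ (hqle t).2.2) (zero_le)))
        (pmf_ne_top _ _)
    exact div_pos (mul_pos h1 h2) h3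
  have hof : ∀ t : A × B × E,
      ENNReal.ofReal (b t) ≤ pXZ (t.1, t.2.2) * pYZ t.2 / pZ t.2.2 := by
    intro t
    rcases eq_or_ne (pZ t.2.2) 0 with h | h
    · simp [hbdef, h]
    · have hZt : 0 < (pZ t.2.2).toReal := ENNReal.toReal_pos h (pmf_ne_top _ _)
      rw [hbdef]
      rw [ENNReal.ofReal_div_of_pos hZt, ENNReal.ofReal_mul ENNReal.toReal_nonneg,
        ENNReal.ofReal_toReal (pmf_ne_top _ _), ENNReal.ofReal_toReal (pmf_ne_top _ _),
        ENNReal.ofReal_toReal (pmf_ne_top _ _)]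
  have hsum : ∑' t, ENNReal.ofReal (b t) ≤ 1 := by
    calc ∑' t, ENNReal.ofReal (b t)
        ≤ ∑' t : A × B × E, pXZ (t.1, t.2.2) * pYZ t.2 / pZ t.2.2 :=
          ENNReal.tsum_le_tsum hof
      _ = ∑' x, ∑' s : B × E, pXZ (x, s.2) * pYZ s / pZ s.2 := ENNReal.tsum_prod'
      _ = ∑' x, ∑' y, ∑' z, pXZ (x, z) * pYZ (y, z) / pZ z :=
          tsum_congr fun x => ENNReal.tsum_prod'
      _ = ∑' x, ∑' z, ∑' y, pXZ (x, z) * pYZ (y, z) / pZ z :=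
          tsum_congr fun x => ENNReal.tsum_comm
      _ ≤ ∑' x, ∑' z, pXZ (x, z) := by
          refine ENNReal.tsum_le_tsum fun x => ENNReal.tsum_le_tsum fun z => ?_
          calc ∑' y, pXZ (x, z) * pYZ (y, z) / pZ z
              = ∑' y, (pXZ (x, z) * (pZ z)⁻¹) * pYZ (y, z) := by
                refine tsum_congr fun y => ?_
                rw [div_eq_mul_inv]; ring
            _ = (pXZ (x, z) * (pZ z)⁻¹) * ∑' y, pYZ (y, z) := ENNReal.tsum_mul_left
            _ = pXZ (x, z) * ((pZ z)⁻¹ * pZ z) := by rw [← hYZ_Z z, mul_assoc]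
            _ ≤ pXZ (x, z) * 1 := mul_le_mul_right (inv_mul_le_one' _ (pmf_ne_top _ _)) _
            _ = pXZ (x, z) := mul_one _
      _ = ∑' s : A × E, pXZ s := ENNReal.tsum_prod'.symm
      _ = 1 := pXZ.tsum_coe
  have hgibbs := gibbs q b hb0 hb1 hpos hsum
  have hdecomp : ∀ t : A × B × E,
      q t * ENNReal.ofReal (-Real.log (b t)) +
        q t * ENNReal.ofReal (-Real.log (pZ t.2.2).toReal) =
      q t * ENNReal.ofReal (-Real.log (pXZ (t.1, t.2.2)).toReal) +
        q t * ENNReal.ofReal (-Real.log (pYZ t.2).toReal) := by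
    intro t
    by_cases h : q t = 0
    · simp [h]
    · have h1 : 0 < (pXZ (t.1, t.2.2)).toReal :=
        ENNReal.toReal_pos (fun hh => h (le_antisymm (hh ▸ (hqle t).1) (zero_le)))
          (pmf_ne_top _ _)
      have h2 : 0 < (pYZ t.2).toReal :=
        ENNReal.toReal_pos (fun hh => h (le_antisymm (hh ▸ (hqle t).2.1) (zero_le)))
          (pmf_ne_top _ _)
      have h3 : 0 < (pZ t.2.2).toReal :=
        ENNReal.toReal_pos (fun hh => h (le_antisymm (hh ▸ (hqle t).2.2) (zero_le)))
          (pmf_ne_top _ _)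
      have hlog : Real.log (b t) =
          Real.log (pXZ (t.1, t.2.2)).toReal + Real.log (pYZ t.2).toReal -
            Real.log (pZ t.2.2).toReal := by
        rw [hbdef]
        rw [Real.log_div (by positivity) (ne_of_gt h3), Real.log_mul (ne_of_gt h1) (ne_of_gt h2)]
      have hl1 : 0 ≤ -Real.log (pXZ (t.1, t.2.2)).toReal := by
        simpa using Real.log_nonpos h1.le (pmf_toReal_le_one _ _)
      have hl2 : 0 ≤ -Real.log (pYZ t.2).toReal := by
        simpa using Real.log_nonpos h2.le (pmf_toReal_le_one _ _)
      have hl3 : 0 ≤ -Real.log (pZ t.2.2).toReal := by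
        simpa using Real.log_nonpos h3.le (pmf_toReal_le_one _ _)
      have hlb : 0 ≤ -Real.log (b t) := by
        simpa using Real.log_nonpos (hb0 t) (hb1 t)
      rw [← mul_add, ← mul_add]
      congr 1
      rw [← ENNReal.ofReal_add hlb hl3, ← ENNReal.ofReal_add hl1 hl2]
      congr 1
      linarith [hlog]
  have hsum2 : (∑' t, q t * ENNReal.ofReal (-Real.log (b t))) + eent pZ =
      eent pXZ + eent pYZ := by
    have e3 : eent pZ = ∑' t, q t * ENNReal.ofReal (-Real.log (pZ t.2.2).toReal) := by
      rw [eent_eq_alt, hpZ, tsum_map_mul]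
    have e1 : eent pXZ = ∑' t, q t * ENNReal.ofReal (-Real.log (pXZ (t.1, t.2.2)).toReal) := by
      rw [eent_eq_alt, hpXZ, tsum_map_mul]
    have e2 : eent pYZ = ∑' t, q t * ENNReal.ofReal (-Real.log (pYZ t.2).toReal) := by
      rw [eent_eq_alt, hpYZ, tsum_map_mul]
    rw [e1, e2, e3, ← ENNReal.tsum_add, ← ENNReal.tsum_add]
    exact tsum_congr hdecomp
  calc eent q + eent pZ ≤ (∑' t, q t * ENNReal.ofReal (-Real.log (b t))) + eent pZ :=
        add_le_add_left hgibbs _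
    _ = eent pXZ + eent pYZ := hsum2


lemma eent_const (q : PMF β) : eent (q.map fun _ => (() : Unit)) = 0 := by
  have h1 : ∀ u : Unit, (q.map fun _ => (() : Unit)) u = 1 := by
    intro u
    rw [PMF.map_apply]
    simpa using q.tsum_coe
  unfold eent
  have : ∀ u : Unit, ENNReal.ofReal (Real.negMulLog (((q.map fun _ => (() : Unit))) u).toReal)
      = 0 := by
    intro u; rw [h1 u]; simp
  rw [tsum_congr this, tsum_zero]

lemma eent_subadd {A B : Type*} (q : PMF (A × B)) :
    eent q ≤ eent (q.map Prod.fst) + eent (q.map Prod.snd) := by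
  set q' := q.map (fun t : A × B => (t.1, t.2, (() : Unit))) with hq'
  have h := eent_submod q'
  have e0 : eent q' = eent q := by
    refine eent_map_inj (fun a b hab => ?_) q
    have h1 := congrArg Prod.fst hab
    have h2 := congrArg (fun z => z.2.1) hab
    exact Prod.ext h1 h2
  have e1 : eent (q'.map fun t => t.2.2) = 0 := by
    have : q'.map (fun t : A × B × Unit => t.2.2) = q.map fun _ => (() : Unit) := by
      rw [hq', PMF.map_comp]
    rw [this, eent_const]
  have e2 : eent (q'.map fun t => (t.1, t.2.2)) = eent (q.map Prod.fst) := by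
    have h1 : q'.map (fun t : A × B × Unit => (t.1, t.2.2)) =
        (q.map Prod.fst).map (fun x => (x, (() : Unit))) := by
      rw [hq', PMF.map_comp, PMF.map_comp]; rfl
    rw [h1]
    exact eent_map_inj (fun a b hab => congrArg Prod.fst hab) _
  have e3 : eent (q'.map Prod.snd) = eent (q.map Prod.snd) := by
    have h1 : q'.map (Prod.snd : A × B × Unit → B × Unit) =
        (q.map Prod.snd).map (fun x => (x, (() : Unit))) := by
      rw [hq', PMF.map_comp, PMF.map_comp]; rfl
    rw [h1]
    exact eent_map_inj (fun a b hab => congrArg Prod.fst hab) _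
  rw [e0, e1, e2, e3, add_zero] at h
  exact h


lemma eent_subsingleton {A : Type*} (hA : ∀ a a' : A, a = a') (q : PMF A) : eent q = 0 := by
  have h1 : ∀ a, q a = 1 := by
    intro a
    rw [← q.tsum_coe]
    exact (tsum_eq_single a fun b hb => absurd (hA b a) hb).symm
  unfold eent
  have : ∀ a, ENNReal.ofReal (Real.negMulLog (q a).toReal) = 0 := by
    intro a; rw [h1 a]; simp
  rw [tsum_congr this, tsum_zero]

lemma eent_marg_ne_top (p : PMF (Fin n → ℕ)) (hp : FiniteEntropy p) (α : Finset (Fin n)) :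
    eent (marginal p α) ≠ ⊤ := by
  classical
  induction α using Finset.induction_on with
  | empty =>
    have hsub : ∀ a a' : ({i // i ∈ (∅ : Finset (Fin n))} → ℕ), a = a' := by
      intro a a'
      funext i
      exact absurd i.2 (Finset.notMem_empty _)
    rw [eent_subsingleton hsub]
    exact ENNReal.zero_ne_top
  | @insert i α hi ih =>
    set u : ({j // j ∈ insert i α} → ℕ) → ℕ × ({j // j ∈ α} → ℕ) :=
      fun y => (y ⟨i, Finset.mem_insert_self i α⟩,
        fun j => y ⟨j.1, Finset.mem_insert_of_mem j.2⟩) with hu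
    have hinj : Function.Injective u := by
      intro y y' hyy
      funext j
      rcases Finset.mem_insert.mp j.2 with h' | h'
      · have hj : j = ⟨i, Finset.mem_insert_self i α⟩ := Subtype.ext h'
        rw [hj]
        exact congrArg Prod.fst hyy
      · exact congrFun (congrArg Prod.snd hyy) ⟨j.1, h'⟩
    have hcomp : (marginal p (insert i α)).map u =
        p.map (fun x => (x i, fun j : {j // j ∈ α} => x j.1)) := by
      rw [marginal, PMF.map_comp]; rfl
    have e4 : eent (marginal p (insert i α)) =
        eent (p.map fun x => (x i, fun j : {j // j ∈ α} => x j.1)) := by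
      rw [← hcomp, eent_map_inj hinj]
    have hsub := eent_subadd (p.map fun x => (x i, fun j : {j // j ∈ α} => x j.1))
    have efst : (p.map fun x => (x i, fun j : {j // j ∈ α} => x j.1)).map Prod.fst =
        p.map fun x => x i := by rw [PMF.map_comp]; rfl
    have esnd : (p.map fun x => (x i, fun j : {j // j ∈ α} => x j.1)).map Prod.snd =
        marginal p α := by rw [PMF.map_comp]; rfl
    rw [efst, esnd] at hsub
    have hfin1 : eent (p.map fun x => x i) ≠ ⊤ := by
      have hnn : ∀ y : ℕ, 0 ≤ Real.negMulLog ((p.map fun x => x i) y).toReal := fun y =>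
        Real.negMulLog_nonneg ENNReal.toReal_nonneg (pmf_toReal_le_one _ _)
      have h5 : eent (p.map fun x => x i) =
          ENNReal.ofReal (∑' y : ℕ, Real.negMulLog ((p.map fun x => x i) y).toReal) :=
        (ENNReal.ofReal_tsum_of_nonneg hnn (hp i)).symm
      rw [h5]
      exact ENNReal.ofReal_ne_top
    rw [e4]
    exact ne_top_of_le_ne_top (by exact ENNReal.add_ne_top.mpr ⟨hfin1, ih⟩) hsub

lemma eent_marg_mono (p : PMF (Fin n → ℕ)) {α β : Finset (Fin n)} (hαβ : α ⊆ β) :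
    eent (marginal p α) ≤ eent (marginal p β) := by
  have h : marginal p α =
      (marginal p β).map (fun y (i : {i // i ∈ α}) => y ⟨i.1, hαβ i.2⟩) := by
    rw [marginal, marginal, PMF.map_comp]; rfl
  rw [h]
  exact eent_map_le _ _

lemma eent_marg_submod (p : PMF (Fin n → ℕ)) (α β : Finset (Fin n)) :
    eent (marginal p (α ∪ β)) + eent (marginal p (α ∩ β)) ≤
      eent (marginal p α) + eent (marginal p β) := by
  classical
  set q := p.map (fun x : Fin n → ℕ =>
    ((fun i : {i // i ∈ α} => x i.1),
     (fun i : {i // i ∈ β} => x i.1),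
     (fun i : {i // i ∈ α ∩ β} => x i.1))) with hq
  have h := eent_submod q
  have e1 : eent (q.map fun t => t.2.2) = eent (marginal p (α ∩ β)) := by
    have : q.map (fun t => t.2.2) = marginal p (α ∩ β) := by
      rw [hq, PMF.map_comp]; rfl
    rw [this]
  have e2 : eent (q.map fun t => (t.1, t.2.2)) = eent (marginal p α) := by
    have h1 : q.map (fun t => (t.1, t.2.2)) = (marginal p α).map
        (fun y => (y, fun i : {i // i ∈ α ∩ β} =>
          y ⟨i.1, Finset.mem_of_mem_inter_left i.2⟩)) := by
      rw [hq, PMF.map_comp, marginal, PMF.map_comp]; rfl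
    rw [h1]
    exact eent_map_inj (fun a b hab => congrArg Prod.fst hab) _
  have e3 : eent (q.map Prod.snd) = eent (marginal p β) := by
    have h1 : q.map Prod.snd = (marginal p β).map
        (fun y => (y, fun i : {i // i ∈ α ∩ β} =>
          y ⟨i.1, Finset.mem_of_mem_inter_right i.2⟩)) := by
      rw [hq, PMF.map_comp, marginal, PMF.map_comp]; rfl
    rw [h1]
    exact eent_map_inj (fun a b hab => congrArg Prod.fst hab) _
  have e4 : eent q = eent (marginal p (α ∪ β)) := by
    have h1 : q = (marginal p (α ∪ β)).map
        (fun y =>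
          ((fun i : {i // i ∈ α} => y ⟨i.1, Finset.mem_union_left β i.2⟩),
           (fun i : {i // i ∈ β} => y ⟨i.1, Finset.mem_union_right α i.2⟩),
           (fun i : {i // i ∈ α ∩ β} =>
             y ⟨i.1, Finset.mem_union_left β (Finset.mem_of_mem_inter_left i.2)⟩))) := by
      rw [hq, marginal, PMF.map_comp]; rfl
    rw [h1]
    refine eent_map_inj (fun y y' hyy => ?_) _
    funext j
    rcases Finset.mem_union.mp j.2 with h' | h'
    · exact congrFun (congrArg Prod.fst hyy) ⟨j.1, h'⟩
    · exact congrFun (congrArg (fun z => z.2.1) hyy) ⟨j.1, h'⟩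
  rw [e1, e2, e3, e4] at h
  exact h

lemma Hm_eq (p : PMF (Fin n → ℕ)) (α : Finset (Fin n)) :
    Hm p α = (eent (marginal p α)).toReal := by
  rw [Hm, eent, ENNReal.tsum_toReal_eq fun _ => ENNReal.ofReal_ne_top]
  refine tsum_congr fun y => ?_
  rw [ENNReal.toReal_ofReal
    (Real.negMulLog_nonneg ENNReal.toReal_nonneg (pmf_toReal_le_one _ _))]

lemma Hm_mono (p : PMF (Fin n → ℕ)) (hp : FiniteEntropy p) {α β : Finset (Fin n)}
    (hαβ : α ⊆ β) : Hm p α ≤ Hm p β := by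
  rw [Hm_eq, Hm_eq]
  exact ENNReal.toReal_mono (eent_marg_ne_top p hp β) (eent_marg_mono p hαβ)

lemma Hm_submod (p : PMF (Fin n → ℕ)) (hp : FiniteEntropy p) (α β : Finset (Fin n)) :
    Hm p (α ∪ β) + Hm p (α ∩ β) ≤ Hm p α + Hm p β := by
  have h := eent_marg_submod p α β
  have hu := eent_marg_ne_top p hp (α ∪ β)
  have hi := eent_marg_ne_top p hp (α ∩ β)
  have ha := eent_marg_ne_top p hp α
  have hb := eent_marg_ne_top p hp β
  rw [Hm_eq, Hm_eq, Hm_eq, Hm_eq, ← ENNReal.toReal_add hu hi, ← ENNReal.toReal_add ha hb]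
  exact ENNReal.toReal_mono (ENNReal.add_ne_top.mpr ⟨ha, hb⟩) h


section Combinatorial

variable (p : PMF (Fin n → ℕ))

/-- conditional mutual information `I(A;B|C)` in terms of `Hm`. -/
noncomputable def IHm (A B C : Finset (Fin n)) : ℝ :=
  Hm p (A ∪ C) + Hm p (B ∪ C) - Hm p (A ∪ B ∪ C) - Hm p C

lemma Hm_congr {α β : Finset (Fin n)} (h : α = β) : Hm p α = Hm p β := by rw [h]

variable (hp : FiniteEntropy p)
include hp

lemma IHm_nonneg (A B C : Finset (Fin n)) : 0 ≤ IHm p A B C := by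
  have h := Hm_submod p hp (A ∪ C) (B ∪ C)
  have h2 : (A ∪ C) ∪ (B ∪ C) = A ∪ B ∪ C := by
    ext x; simp only [Finset.mem_union]; tauto
  have h3 : Hm p C ≤ Hm p ((A ∪ C) ∩ (B ∪ C)) :=
    Hm_mono p hp (Finset.subset_inter Finset.subset_union_right Finset.subset_union_right)
  rw [h2] at h
  unfold IHm
  linarith

omit hp in
lemma IHm_comm (A B C : Finset (Fin n)) : IHm p A B C = IHm p B A C := by
  unfold IHm
  rw [Hm_congr p (show A ∪ B ∪ C = B ∪ A ∪ C by ext x; simp only [Finset.mem_union]; tauto)]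
  ring

lemma IHm_mono_left {W Q : Finset (Fin n)} (B C : Finset (Fin n)) (hWQ : W ⊆ Q) :
    IHm p W B C ≤ IHm p Q B C := by
  have h := Hm_submod p hp (Q ∪ C) (W ∪ B ∪ C)
  have h2 : (Q ∪ C) ∪ (W ∪ B ∪ C) = Q ∪ B ∪ C := by
    ext x
    have hx := @hWQ x
    simp only [Finset.mem_union] at *
    tauto
  have h3 : Hm p (W ∪ C) ≤ Hm p ((Q ∪ C) ∩ (W ∪ B ∪ C)) := by
    refine Hm_mono p hp ?_
    intro x hx
    have hx2 := @hWQ x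
    simp only [Finset.mem_union, Finset.mem_inter] at *
    tauto
  rw [h2] at h
  unfold IHm
  linarith

omit hp in
lemma J_cons (C Q : Finset (Fin n)) (Qs : Multiset (Finset (Fin n))) :
    J p C (Q ::ₘ Qs) = J p C Qs + IHm p Q Qs.sup C := by
  unfold J Hc IHm
  rw [Multiset.map_cons, Multiset.sum_cons, Multiset.sup_cons, Finset.sup_eq_union]
  ring

lemma J_nonneg (C : Finset (Fin n)) (Qs : Multiset (Finset (Fin n))) : 0 ≤ J p C Qs := by
  induction Qs using Multiset.induction_on with
  | empty => simp [J, Hc]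
  | cons Q Qs ih =>
    rw [J_cons]
    have := IHm_nonneg p hp Q Qs.sup C
    linarith

omit hp in
lemma sup_le_of_rel {Ws Qs : Multiset (Finset (Fin n))}
    (h : Multiset.Rel (· ⊆ ·) Ws Qs) : Ws.sup ⊆ Qs.sup := by
  induction h with
  | zero => simp
  | @cons a b as bs hab hrel ih =>
    rw [Multiset.sup_cons, Multiset.sup_cons]
    exact Finset.union_subset_union hab ih

lemma J_mono_rel (C : Finset (Fin n)) {Ws Qs : Multiset (Finset (Fin n))}
    (h : Multiset.Rel (· ⊆ ·) Ws Qs) : J p C Ws ≤ J p C Qs := by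
  induction h with
  | zero => exact le_refl _
  | @cons W Q Ws' Qs' hWQ hrel ih =>
    rw [J_cons, J_cons]
    have h1 : IHm p W Ws'.sup C ≤ IHm p Q Ws'.sup C := IHm_mono_left p hp _ _ hWQ
    have h2 : IHm p Q Ws'.sup C ≤ IHm p Q Qs'.sup C := by
      rw [IHm_comm p Q Ws'.sup C, IHm_comm p Q Qs'.sup C]
      exact IHm_mono_left p hp _ _ (sup_le_of_rel hrel)
    linarith

lemma Hc_union_le (A C S : Finset (Fin n)) : Hc p A (C ∪ S) ≤ Hc p A C := by
  have h := Hm_submod p hp (A ∪ C) (C ∪ S)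
  have h2 : (A ∪ C) ∪ (C ∪ S) = A ∪ (C ∪ S) := by
    ext x; simp only [Finset.mem_union]; tauto
  have h3 : Hm p C ≤ Hm p ((A ∪ C) ∩ (C ∪ S)) :=
    Hm_mono p hp (Finset.subset_inter Finset.subset_union_right Finset.subset_union_left)
  rw [h2] at h
  unfold Hc
  linarith

lemma J_move (W S C : Finset (Fin n)) (Ws : Multiset (Finset (Fin n))) :
    J p (C ∪ S) (W ::ₘ Ws) ≤ J p C ((W ∪ S) ::ₘ Ws) := by
  unfold J
  rw [Multiset.map_cons, Multiset.sum_cons, Multiset.map_cons, Multiset.sum_cons,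
    Multiset.sup_cons, Multiset.sup_cons]
  have hsum : ((Ws.map fun A => Hc p A (C ∪ S))).sum ≤ ((Ws.map fun A => Hc p A C)).sum :=
    Multiset.sum_map_le_sum_map _ _ fun A _ => Hc_union_le p hp A C S
  have e1 : Hm p (W ∪ (C ∪ S)) = Hm p ((W ∪ S) ∪ C) :=
    Hm_congr p (by ext x; simp only [Finset.mem_union]; tauto)
  have e2 : Hm p ((W ⊔ Ws.sup) ∪ (C ∪ S)) = Hm p (((W ∪ S) ⊔ Ws.sup) ∪ C) :=
    Hm_congr p (by ext x; simp only [Finset.sup_eq_union, Finset.mem_union]; tauto)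
  simp only [Hc] at hsum ⊢
  rw [e1, e2]
  linarith

omit hp in
lemma mem_msup {Qs : Multiset (Finset (Fin n))} {x : Fin n} (hx : x ∈ Qs.sup) :
    ∃ Q ∈ Qs, x ∈ Q := by
  induction Qs using Multiset.induction_on with
  | empty => simp at hx
  | cons a s ih =>
    rw [Multiset.sup_cons] at hx
    rcases Finset.mem_union.mp (by simpa [Finset.sup_eq_union] using hx) with h | h
    · exact ⟨a, Multiset.mem_cons_self a s, h⟩
    · obtain ⟨Q, hQ, hxQ⟩ := ih h
      exact ⟨Q, Multiset.mem_cons_of_mem hQ, hxQ⟩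

lemma J_main (R : Finset (Fin n)) :
    ∀ (C : Finset (Fin n)) (Ws Qs : Multiset (Finset (Fin n))),
      Multiset.Rel (· ⊆ ·) Ws Qs → (∀ x ∈ R, x ∈ Qs.sup ∧ x ∉ Ws.sup) →
      J p (C ∪ R) Ws ≤ J p C Qs := by
  classical
  induction R using Finset.strongInductionOn with
  | _ R ih =>
  intro C Ws Qs hrel hR
  rcases R.eq_empty_or_nonempty with rfl | ⟨r, hr⟩
  · rw [Finset.union_empty]
    exact J_mono_rel p hp C hrel
  · obtain ⟨hrQ, hrW⟩ := hR r hr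
    obtain ⟨Q, hQmem, hrQ'⟩ := mem_msup hrQ
    have hQs : Q ::ₘ Qs.erase Q = Qs := Multiset.cons_erase hQmem
    rw [← hQs] at hrel
    obtain ⟨W, Ws', hWQ, hrel', rfl⟩ := Multiset.rel_cons_right.mp hrel
    have hCR : C ∪ R = (C ∪ R.erase r) ∪ {r} := by
      ext x
      by_cases hxr : x = r
      · subst hxr; simp [hr]
      · simp [Finset.mem_union, Finset.mem_erase, Finset.mem_singleton, hxr]
    have hrel2 : Multiset.Rel (· ⊆ ·) ((W ∪ {r}) ::ₘ Ws') (Q ::ₘ Qs.erase Q) :=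
      Multiset.Rel.cons (Finset.union_subset hWQ (by simpa using hrQ')) hrel'
    have hcond2 : ∀ x ∈ R.erase r,
        x ∈ (Q ::ₘ Qs.erase Q).sup ∧ x ∉ ((W ∪ {r}) ::ₘ Ws').sup := by
      intro x hx
      obtain ⟨hx1, hx2⟩ := Finset.mem_erase.mp hx
      obtain ⟨hxQ, hxW⟩ := hR x hx2
      refine ⟨by rw [hQs]; exact hxQ, ?_⟩
      rw [Multiset.sup_cons] at hxW ⊢
      simp only [Finset.sup_eq_union, Finset.mem_union, Finset.mem_singleton] at hxW ⊢
      tauto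
    calc J p (C ∪ R) (W ::ₘ Ws') = J p ((C ∪ R.erase r) ∪ {r}) (W ::ₘ Ws') := by rw [← hCR]
      _ ≤ J p (C ∪ R.erase r) ((W ∪ {r}) ::ₘ Ws') := J_move p hp W {r} (C ∪ R.erase r) Ws'
      _ ≤ J p C (Q ::ₘ Qs.erase Q) :=
          ih (R.erase r) (Finset.erase_ssubset hr) C _ _ hrel2 hcond2
      _ = J p C Qs := by rw [hQs]

end Combinatorial

/-- `(C,⟨Q_1,…,Q_k⟩)` is valid iff for every choice of `W_i ⊆ Q_i`
and every `R ⊆ (∪ Q_i) \ (∪ W_i)`, the CMI `(C ∪ R, ⟨W_1,…,W_k⟩)` is valid. -/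
theorem stmt18 {n k : ℕ} (p : PMF (Fin n → ℕ)) (hp : FiniteEntropy p)
    (C : Finset (Fin n)) (Q : Fin k → Finset (Fin n)) :
    Valid p ⟨C, Multiset.map Q Finset.univ.val⟩ ↔
      ∀ W : Fin k → Finset (Fin n), (∀ i, W i ⊆ Q i) →
        ∀ R ⊆ Finset.univ.sup Q \ Finset.univ.sup W,
          Valid p ⟨C ∪ R, Multiset.map W Finset.univ.val⟩ := by
  constructor
  · intro hV W hW R hR
    have hrel : Multiset.Rel (· ⊆ ·) (Multiset.map W Finset.univ.val)
        (Multiset.map Q Finset.univ.val) :=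
      Multiset.rel_map.mpr (Multiset.rel_refl_of_refl_on fun i _ => hW i)
    have hsup : ∀ f : Fin k → Finset (Fin n),
        (Multiset.map f Finset.univ.val).sup = Finset.univ.sup f := fun f =>
      Finset.sup_def.symm
    have hcond : ∀ x ∈ R, x ∈ (Multiset.map Q Finset.univ.val).sup ∧
        x ∉ (Multiset.map W Finset.univ.val).sup := by
      intro x hx
      have hx2 := Finset.mem_sdiff.mp (hR hx)
      rw [hsup Q, hsup W]
      exact hx2
    have h1 := J_main p hp R C _ _ hrel hcond
    have h2 := J_nonneg p hp (C ∪ R) (Multiset.map W Finset.univ.val)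
    have hV' : J p C (Multiset.map Q Finset.univ.val) = 0 := hV
    show J p (C ∪ R) (Multiset.map W Finset.univ.val) = 0
    linarith
  · intro h
    have h0 := h Q (fun i => subset_rfl) ∅ (Finset.empty_subset _)
    have h1 : J p (C ∪ ∅) (Multiset.map Q Finset.univ.val) = 0 := h0
    rw [Finset.union_empty] at h1
    exact h1

end Paper
end
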